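/- The function h(Δ) = (exp(-2ΓΔ) − 1 + 2ΓΔ)/(2Γ²Δ²) is strictly decreasing in Δ on (0,∞) for fixed Γ > 0 (i.e., speckle contrast decreases monotonically with exposure time under exponential decorrelation). -/

import Mathlib

/-!
Substituting `x = 2ΓΔ` gives `h Δ = 2 g x` with `g x = (exp (-x) - 1 + x) / x ^ 2`, so it suffices
that `g` is strictly decreasing on `(0, ∞)`. Its derivative has the sign of
`2 - x - (x + 2) exp (-x)`, which vanishes at `0` and is strictly decreasing because
`(x + 1) exp (-x) < 1`.
-/

open Real Set

lemma two_sub_lt_add_two_mul_exp_neg {x : ℝ} (hx : 0 < x) : 2 - x < (x + 2) * exp (-x) := by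
  have hmono : StrictMonoOn (fun y : ℝ => (y + 2) * exp (-y) + y) (Ici 0) := by
    refine strictMonoOn_of_deriv_pos (convex_Ici 0) (by fun_prop) fun y hy => ?_
    rw [interior_Ici, mem_Ioi] at hy
    have hderiv : HasDerivAt (fun y : ℝ => (y + 2) * exp (-y) + y)
        (1 - (y + 1) * exp (-y)) y :=
      ((((hasDerivAt_id y).add_const 2).mul (hasDerivAt_neg y).exp).add
        (hasDerivAt_id y)).congr_deriv (by simp only [id]; ring)
    have hlt : (y + 1) * exp (-y) < 1 := by
      calc (y + 1) * exp (-y) < exp y * exp (-y) := by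
            gcongr
            exact add_one_lt_exp hy.ne'
        _ = 1 := by rw [← exp_add, add_neg_cancel, exp_zero]
    rw [hderiv.deriv]
    linarith
  have hzero := hmono self_mem_Ici hx.le hx
  simp only [neg_zero, exp_zero] at hzero
  linarith

lemma strictAntiOn_exp_neg_sub_one_add_div_sq :
    StrictAntiOn (fun x : ℝ => (exp (-x) - 1 + x) / x ^ 2) (Ioi 0) := by
  refine strictAntiOn_of_deriv_neg (convex_Ioi 0)
    (ContinuousOn.div (by fun_prop) (by fun_prop) fun x hx => pow_ne_zero 2 (ne_of_gt hx))
    fun x hx => ?_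
  rw [interior_Ioi, mem_Ioi] at hx
  have hnum : HasDerivAt (fun x : ℝ => exp (-x) - 1 + x) (1 - exp (-x)) x :=
    ((((hasDerivAt_neg x).exp).sub_const 1).add (hasDerivAt_id x)).congr_deriv
      (by ring)
  have hquot : HasDerivAt (fun x : ℝ => (exp (-x) - 1 + x) / x ^ 2)
      (x * (2 - x - (x + 2) * exp (-x)) / (x ^ 2) ^ 2) x :=
    (hnum.div (hasDerivAt_pow 2 x) (pow_ne_zero 2 hx.ne')).congr_deriv
      (by norm_num; ring)
  rw [hquot.deriv]
  refine div_neg_of_neg_of_pos ?_ (by positivity)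
  exact mul_neg_of_pos_of_neg hx (by linarith [two_sub_lt_add_two_mul_exp_neg hx])

/-- `h(Δ) = (exp(-2ΓΔ) − 1 + 2ΓΔ)/(2Γ²Δ²)` is strictly decreasing
on `(0,∞)` for fixed `Γ > 0`. -/
theorem stmt_9 (Γ : ℝ) (hΓ : 0 < Γ)
    (h : ℝ → ℝ)
    (hh : ∀ Δ, h Δ = (Real.exp (-2 * Γ * Δ) - 1 + 2 * Γ * Δ) / (2 * Γ ^ 2 * Δ ^ 2)) :
    StrictAntiOn h (Set.Ioi 0) := by
  have hsubst : ∀ Δ, h Δ = 2 * ((exp (-(2 * Γ * Δ)) - 1 + 2 * Γ * Δ) / (2 * Γ * Δ) ^ 2) := by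
    intro Δ
    rw [hh, neg_mul_eq_neg_mul, neg_mul_eq_neg_mul]
    by_cases hΔ : Δ = 0
    · simp [hΔ]
    · field_simp
  intro a ha b hb hab
  rw [hsubst, hsubst]
  have hscale : ∀ {Δ : ℝ}, 0 < Δ → 2 * Γ * Δ ∈ Ioi (0 : ℝ) := fun hΔ => by
    rw [mem_Ioi]
    positivity
  have hanti := strictAntiOn_exp_neg_sub_one_add_div_sq (hscale ha) (hscale hb) (by gcongr)
  linarith
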